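/- Let a be a leaf label and b an inner node label, and let φ be a first-order sentence over forests of the form ∃x₁…xᵢ ∀y₁…yⱼ ψ(x₁,…,xᵢ,y₁,…,yⱼ) with ψ quantifier-free, in the signature with unary label predicates and the strict ancestor order. Let n > i + j. If the forest n(ba) satisfies φ, then so does the forest n(ba) + a. -/

import Mathlib

/- One-sorted trees and (possibly empty) forests over a single alphabet `A`. -/
mutual
inductive OTree (A : Type) : Type where
  | node (a : A) (f : OForest A) : OTree A
inductive OForest (A : Type) : Type where
  | nil : OForest A
  | cons (t : OTree A) (f : OForest A) : OForest A
end

def OForest.append {A : Type} : OForest A → OForest A → OForest A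
  | .nil, f => f
  | .cons t f', f => .cons t (f'.append f)

def OForest.toList {A : Type} : OForest A → List (OTree A)
  | .nil => []
  | .cons t f => t :: f.toList

def OTree.children {A : Type} : OTree A → List (OTree A)
  | .node _ f => f.toList

def OTree.rootLabel {A : Type} : OTree A → A
  | .node a _ => a

def OTree.subtreeAt {A : Type} : List ℕ → OTree A → Option (OTree A)
  | [], t => some t
  | i :: p, t =>
    match t.children[i]? with
    | some c => OTree.subtreeAt p c
    | none => none

/-- Nodes of a one-sorted forest are nonempty paths: the head picks a tree of the forest. -/
def OForest.subtreeAt {A : Type} (f : OForest A) : List ℕ → Option (OTree A)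
  | [] => none
  | i :: p =>
    match f.toList[i]? with
    | some t => OTree.subtreeAt p t
    | none => none

/-- The label of the node `x` of the one-sorted forest `f`, if `x` is a valid node. -/
def OForest.labelAt {A : Type} (f : OForest A) (x : List ℕ) : Option A :=
  (f.subtreeAt x).map OTree.rootLabel

/- One-sorted contexts: one-sorted forests with exactly one leaf replaced by the hole `□`
(the empty context is `□` itself). -/
mutual
inductive OCTree (A : Type) : Type where
  | hole : OCTree A
  | node (a : A) (c : OContext A) : OCTree A
inductive OContext (A : Type) : Type where
  | mk (l : OForest A) (c : OCTree A) (r : OForest A) : OContext A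
end

/- Substitution of a one-sorted forest into the hole of a one-sorted context. -/
mutual
def OCTree.subst {A : Type} : OCTree A → OForest A → OForest A
  | .hole, f => f
  | .node a c, f => .cons (.node a (c.subst f)) .nil
def OContext.subst {A : Type} : OContext A → OForest A → OForest A
  | .mk l c r, f => l.append ((c.subst f).append r)
end

/- A one-sorted morphism assigns to each letter of the source alphabet a (possibly empty)
one-sorted context over the target alphabet; it extends uniquely to all one-sorted forests:
the image of a tree `a(f)` is the image context of `a` with the image of `f` substituted
into its hole. -/
mutual
def omapT {A B : Type} (α : A → OContext B) : OTree A → OForest B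
  | .node a f => (α a).subst (omapF α f)
def omapF {A B : Type} (α : A → OContext B) : OForest A → OForest B
  | .nil => .nil
  | .cons t f => (omapT α t).append (omapF α f)
end

/-- Quantifier-free first-order formulas with `k` variables, in the signature with a unary
label predicate for each letter and the strict ancestor order `x < y`. -/
inductive QFFormula (A : Type) (k : ℕ) : Type where
  | lab (a : A) (x : Fin k) : QFFormula A k
  | lt (x y : Fin k) : QFFormula A k
  | eq (x y : Fin k) : QFFormula A k
  | not (φ : QFFormula A k) : QFFormula A k
  | and (φ ψ : QFFormula A k) : QFFormula A k

/-- Satisfaction of a quantifier-free formula in a forest under the assignment `ρ` of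
nodes (paths) to variables: `lab a x` holds iff the node `ρ x` carries the label `a`, and
`lt x y` holds iff `ρ x` is a proper ancestor of `ρ y`. -/
def QFSat {A : Type} {k : ℕ} (f : OForest A) (ρ : Fin k → List ℕ) : QFFormula A k → Prop
  | .lab a x => f.labelAt (ρ x) = some a
  | .lt x y => ρ x <+: ρ y ∧ ρ x ≠ ρ y
  | .eq x y => ρ x = ρ y
  | .not φ => ¬ QFSat f ρ φ
  | .and φ ψ => QFSat f ρ φ ∧ QFSat f ρ ψ

/-- Satisfaction in the forest `f` of the sentence `∃x₁…xᵢ ∀y₁…yⱼ ψ`, where variables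
range over the nodes of `f`. -/
def SatSigma2 {A : Type} (f : OForest A) (i j : ℕ) (ψ : QFFormula A (i + j)) : Prop :=
  ∃ ρ : Fin i → List ℕ, (∀ k, (f.subtreeAt (ρ k)).isSome) ∧
    ∀ σ : Fin j → List ℕ, (∀ k, (f.subtreeAt (σ k)).isSome) →
      QFSat f (Fin.addCases ρ σ) ψ

/-- The tree `ba`: a root labeled `b` with a single child leaf labeled `a`. -/
def baTree {A : Type} (a b : A) : OTree A := .node b (.cons (.node a .nil) .nil)

/-- The forest `n(ba)` consisting of `n` copies of the tree `ba`. -/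
def nba {A : Type} (a b : A) : ℕ → OForest A
  | 0 => .nil
  | n + 1 => .cons (baTree a b) (nba a b n)

/-- The forest `n(ba) + a`: `n` copies of `ba` followed by a single leaf labeled `a`. -/
def nbaPlusA {A : Type} (a b : A) (n : ℕ) : OForest A :=
  (nba a b n).append (.cons (.node a .nil) .nil)

/-!
Existential witnesses in `n(ba)` remain witnesses in `n(ba) + a`, since every node of `n(ba)`
is a node of `n(ba) + a` with the same label. For the universal part, fix `j` nodes of
`n(ba) + a`; together with the `i` witnesses they meet fewer than `n` copies of `ba`, so some
copy `t` is untouched. Sending the extra leaf `a` to the leaf of copy `t` and fixing every other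
node preserves labels, ancestry and equality among the `i + j` chosen nodes, so `ψ` holds there
iff it holds at their images in `n(ba)`, which the hypothesis guarantees.
-/

lemma OForest.toList_append {A : Type} (f g : OForest A) :
    (f.append g).toList = f.toList ++ g.toList := by
  match f with
  | .nil => rfl
  | .cons t f' => simp [OForest.append, OForest.toList, OForest.toList_append f' g]

lemma OForest.subtreeAt_cons {A : Type} (f : OForest A) (k : ℕ) (p : List ℕ) :
    f.subtreeAt (k :: p) = f.toList[k]?.bind (OTree.subtreeAt p) := by
  cases h : f.toList[k]? <;> simp [OForest.subtreeAt, h]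

lemma OForest.exists_cons_of_isSome_subtreeAt {A : Type} {f : OForest A} {x : List ℕ}
    (hx : (f.subtreeAt x).isSome) : ∃ k p, x = k :: p ∧ k < f.toList.length := by
  obtain _ | ⟨k, p⟩ := x
  · simp [OForest.subtreeAt] at hx
  · refine ⟨k, p, rfl, ?_⟩
    by_contra hk
    simp [OForest.subtreeAt_cons, List.getElem?_eq_none (not_lt.mp hk)] at hx

lemma OForest.subtreeAt_append_of_lt {A : Type} (f g : OForest A) {k : ℕ}
    (hk : k < f.toList.length) (p : List ℕ) :
    (f.append g).subtreeAt (k :: p) = f.subtreeAt (k :: p) := by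
  simp [OForest.subtreeAt_cons, OForest.toList_append, List.getElem?_append_left hk]

lemma OTree.subtreeAt_leaf_cons {A : Type} (a : A) (k : ℕ) (p : List ℕ) :
    OTree.subtreeAt (k :: p) (.node a .nil) = none := by
  simp [OTree.subtreeAt, OTree.children, OForest.toList]

lemma qfSat_iff_of_labelAt_of_prefix {A : Type} {k : ℕ} {f g : OForest A}
    {ρ ρ' : Fin k → List ℕ} (hlabel : ∀ x, f.labelAt (ρ x) = g.labelAt (ρ' x))
    (hprefix : ∀ x y, ρ x <+: ρ y ↔ ρ' x <+: ρ' y) (ψ : QFFormula A k) :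
    QFSat f ρ ψ ↔ QFSat g ρ' ψ := by
  have eq_iff_prefix (l m : List ℕ) : l = m ↔ l <+: m ∧ m <+: l :=
    ⟨fun h => ⟨h ▸ List.prefix_rfl, h ▸ List.prefix_rfl⟩,
      fun ⟨h, h'⟩ => h.eq_of_length (le_antisymm h.length_le h'.length_le)⟩
  have eq_iff (x y : Fin k) : ρ x = ρ y ↔ ρ' x = ρ' y := by
    rw [eq_iff_prefix, eq_iff_prefix, hprefix, hprefix]
  induction ψ with
  | lab c x => simp only [QFSat, hlabel]
  | lt x y => exact and_congr (hprefix x y) (not_congr (eq_iff x y))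
  | eq x y => exact eq_iff x y
  | not φ ih => exact not_congr ih
  | and φ χ ih₁ ih₂ => exact and_congr ih₁ ih₂

lemma Fin.exists_lt_forall_ne {m n : ℕ} (g : Fin m → ℕ) (hmn : m < n) :
    ∃ t < n, ∀ x, g x ≠ t := by
  have hcard : (Finset.univ.image g).card < (Finset.range n).card := by
    simpa using Finset.card_image_le.trans_lt (by simpa using hmn)
  obtain ⟨t, ht, hnot⟩ := Finset.exists_mem_notMem_of_card_lt_card hcard
  exact ⟨t, Finset.mem_range.mp ht, fun x hx => hnot (hx ▸ Finset.mem_image_of_mem g (by simp))⟩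

section Nba

variable {A : Type} (a b : A)

lemma length_toList_nba (n : ℕ) : (nba a b n).toList.length = n := by
  induction n with
  | zero => rfl
  | succ n ih => simp [nba, OForest.toList, ih]

lemma subtreeAt_nba_leaf {n k : ℕ} (hk : k < n) :
    (nba a b n).subtreeAt [k, 0] = some (.node a .nil) := by
  induction n generalizing k with
  | zero => omega
  | succ n ih =>
    cases k with
    | zero => rfl
    | succ k => simpa [nba, OForest.subtreeAt, OForest.toList] using ih (by omega)

lemma subtreeAt_nbaPlusA_of_lt {n k : ℕ} (hk : k < n) (p : List ℕ) :
    (nbaPlusA a b n).subtreeAt (k :: p) = (nba a b n).subtreeAt (k :: p) :=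
  OForest.subtreeAt_append_of_lt _ _ (by rwa [length_toList_nba]) p

lemma subtreeAt_nbaPlusA_last (n : ℕ) (p : List ℕ) :
    (nbaPlusA a b n).subtreeAt (n :: p) = OTree.subtreeAt p (.node a .nil) := by
  simp [nbaPlusA, OForest.subtreeAt_cons, OForest.toList_append, OForest.toList,
    length_toList_nba]

lemma nbaPlusA_node_cases {n : ℕ} {x : List ℕ}
    (hx : ((nbaPlusA a b n).subtreeAt x).isSome) :
    x = [n] ∨ ∃ k p, x = k :: p ∧ k < n := by
  obtain ⟨k, p, rfl, hk⟩ := OForest.exists_cons_of_isSome_subtreeAt hx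
  rw [nbaPlusA, OForest.toList_append, List.length_append, length_toList_nba] at hk
  rcases Nat.lt_or_ge k n with hkn | hkn
  · exact Or.inr ⟨k, p, rfl, hkn⟩
  · obtain rfl : k = n := by simp [OForest.toList] at hk; omega
    obtain _ | ⟨l, p⟩ := p
    · exact Or.inl rfl
    · simp [subtreeAt_nbaPlusA_last, OTree.subtreeAt_leaf_cons] at hx

def redirectLastLeaf (n t : ℕ) (x : List ℕ) : List ℕ := if x = [n] then [t, 0] else x

lemma redirectLastLeaf_last (n t : ℕ) : redirectLastLeaf n t [n] = [t, 0] := if_pos rfl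

lemma redirectLastLeaf_cons_of_lt {n t k : ℕ} (hk : k < n) (p : List ℕ) :
    redirectLastLeaf n t (k :: p) = k :: p :=
  if_neg fun h => hk.ne (List.cons.inj h).1

variable {n t : ℕ} {x y : List ℕ}

lemma redirectLastLeaf_of_nba_node (hx : ((nba a b n).subtreeAt x).isSome) :
    redirectLastLeaf n t x = x := by
  obtain ⟨k, p, rfl, hk⟩ := OForest.exists_cons_of_isSome_subtreeAt hx
  exact redirectLastLeaf_cons_of_lt (by rwa [length_toList_nba] at hk) p

lemma isSome_subtreeAt_nbaPlusA_of_nba (hx : ((nba a b n).subtreeAt x).isSome) :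
    ((nbaPlusA a b n).subtreeAt x).isSome := by
  obtain ⟨k, p, rfl, hk⟩ := OForest.exists_cons_of_isSome_subtreeAt hx
  rw [length_toList_nba] at hk
  rwa [subtreeAt_nbaPlusA_of_lt a b hk]

lemma isSome_subtreeAt_redirectLastLeaf (ht : t < n)
    (hx : ((nbaPlusA a b n).subtreeAt x).isSome) :
    ((nba a b n).subtreeAt (redirectLastLeaf n t x)).isSome := by
  rcases nbaPlusA_node_cases a b hx with rfl | ⟨k, p, rfl, hk⟩
  · simp [redirectLastLeaf_last, subtreeAt_nba_leaf a b ht]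
  · rwa [redirectLastLeaf_cons_of_lt hk, ← subtreeAt_nbaPlusA_of_lt a b hk]

lemma labelAt_redirectLastLeaf (ht : t < n) (hx : ((nbaPlusA a b n).subtreeAt x).isSome) :
    (nba a b n).labelAt (redirectLastLeaf n t x) = (nbaPlusA a b n).labelAt x := by
  rcases nbaPlusA_node_cases a b hx with rfl | ⟨k, p, rfl, hk⟩
  · simp [redirectLastLeaf_last, OForest.labelAt, subtreeAt_nba_leaf a b ht,
      subtreeAt_nbaPlusA_last, OTree.subtreeAt]
  · rw [redirectLastLeaf_cons_of_lt hk, OForest.labelAt, OForest.labelAt,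
      subtreeAt_nbaPlusA_of_lt a b hk]

lemma redirectLastLeaf_prefix_iff (hx : ((nbaPlusA a b n).subtreeAt x).isSome)
    (hy : ((nbaPlusA a b n).subtreeAt y).isSome) (hxt : x.headI ≠ t) (hyt : y.headI ≠ t) :
    redirectLastLeaf n t x <+: redirectLastLeaf n t y ↔ x <+: y := by
  rcases nbaPlusA_node_cases a b hx with rfl | ⟨k, p, rfl, hk⟩ <;>
    rcases nbaPlusA_node_cases a b hy with rfl | ⟨l, q, rfl, hl⟩ <;>
    simp (disch := assumption) only [redirectLastLeaf_last, redirectLastLeaf_cons_of_lt,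
      List.cons_prefix_cons, List.headI_cons] at hxt hyt ⊢ <;> grind

lemma qfSat_nbaPlusA_iff {k : ℕ} (ht : t < n) {τ : Fin k → List ℕ}
    (hτ : ∀ m, ((nbaPlusA a b n).subtreeAt (τ m)).isSome) (hτt : ∀ m, (τ m).headI ≠ t)
    (ψ : QFFormula A k) :
    QFSat (nbaPlusA a b n) τ ψ ↔ QFSat (nba a b n) (redirectLastLeaf n t ∘ τ) ψ :=
  qfSat_iff_of_labelAt_of_prefix (fun m => (labelAt_redirectLastLeaf a b ht (hτ m)).symm)
    (fun m m' => (redirectLastLeaf_prefix_iff a b (hτ m) (hτ m') (hτt m) (hτt m')).symm) ψ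

end Nba

/-- for a sentence `φ = ∃x₁…xᵢ ∀y₁…yⱼ ψ` with `ψ` quantifier-free and
`n > i + j`, if the forest `n(ba)` satisfies `φ` then so does `n(ba) + a`. -/
theorem sigma2_pumping {A : Type} (a b : A) (i j : ℕ) (ψ : QFFormula A (i + j))
    (n : ℕ) (hn : n > i + j) (h : SatSigma2 (nba a b n) i j ψ) :
    SatSigma2 (nbaPlusA a b n) i j ψ := by
  obtain ⟨ρ, hρ, hsat⟩ := h
  refine ⟨ρ, fun m => isSome_subtreeAt_nbaPlusA_of_nba a b (hρ m), fun σ hσ => ?_⟩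
  set τ : Fin (i + j) → List ℕ := Fin.addCases ρ σ
  have hτ : ∀ m, ((nbaPlusA a b n).subtreeAt (τ m)).isSome :=
    Fin.addCases (fun m => by simpa [τ] using isSome_subtreeAt_nbaPlusA_of_nba a b (hρ m))
      (fun m => by simpa [τ] using hσ m)
  obtain ⟨t, ht, hτt⟩ := Fin.exists_lt_forall_ne (fun m => (τ m).headI) hn
  have hredirect : redirectLastLeaf n t ∘ τ = Fin.addCases ρ (redirectLastLeaf n t ∘ σ) := by
    funext m
    refine Fin.addCases (fun m => ?_) (fun m => ?_) m
    · simpa [τ] using redirectLastLeaf_of_nba_node a b (hρ m)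
    · simp [τ]
  rw [qfSat_nbaPlusA_iff a b ht hτ hτt, hredirect]
  exact hsat _ fun m => isSome_subtreeAt_redirectLastLeaf a b ht (hσ m)
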